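/- arXiv:2404.11188 — 6 statements merged into one kernel-verified Lean document; each statement's English description precedes it below -/
import Mathlib

section
/- Let R be a field, G a group, H a normal subgroup of G, and V an irreducible R-linear representation of G. If the restriction of V to H contains an irreducible H-subrepresentation, then the restriction of V to H is semisimple. -/
/-!
For `g ∈ G` the map `W ↦ ρ(g) W` preserves the `H`-invariant subspaces (as `H` is normal) and
inclusion between them, so it permutes the irreducible ones. Their sum, the `H`-socle, is therefore
`G`-invariant, and it is nonzero as it contains the given irreducible subspace; since `V` is
irreducible it is all of `V`. A module which is the sum of its simple submodules is semisimple;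
this is applied to `V` as an `R[H]`-module, whose submodules are the `H`-invariant subspaces
via `Representation.mapSubmodule`.
-/

namespace Representation

section Semiring

variable {k H V : Type*} [CommSemiring k] [Monoid H] [AddCommMonoid V] [Module k V]
  (σ : Representation k H V)

def socle : Submodule k V := ⨆ (W : σ.invtSubmodule) (_ : IsAtom W), (W : Submodule k V)

variable {σ}

theorem le_socle {W : σ.invtSubmodule} (hW : IsAtom W) : (W : Submodule k V) ≤ σ.socle :=
  le_iSup₂_of_le W hW le_rfl

theorem invtSubmodule.isCompl_iff {p q : σ.invtSubmodule} :
    IsCompl p q ↔ IsCompl (p : Submodule k V) q := by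
  obtain ⟨p, hp⟩ := p
  obtain ⟨q, hq⟩ := q
  simp only [_root_.isCompl_iff, disjoint_iff, codisjoint_iff, Sublattice.mk_inf_mk,
    Sublattice.mk_sup_mk, Subtype.ext_iff, invtSubmodule.coe_bot, invtSubmodule.coe_top]

theorem invtSubmodule.isAtom_mk_iff {W : Submodule k V} (hW : W ∈ σ.invtSubmodule) :
    IsAtom (⟨W, hW⟩ : σ.invtSubmodule) ↔ W ≠ ⊥ ∧ ∀ W' ∈ σ.invtSubmodule, W' < W → W' = ⊥ := by
  constructor
  · rintro ⟨hne, hmin⟩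
    exact ⟨fun h => hne (Subtype.ext h),
      fun W' hW' hlt => congrArg Subtype.val (hmin ⟨W', hW'⟩ hlt)⟩
  · rintro ⟨hne, hmin⟩
    exact ⟨fun h => hne (congrArg Subtype.val h), fun W' hlt => Subtype.ext (hmin W' W'.2 hlt)⟩

end Semiring

theorem complementedLattice_invtSubmodule_of_socle_eq_top {k H V : Type*} [CommRing k] [Monoid H]
    [AddCommGroup V] [Module k V] {σ : Representation k H V} (h : σ.socle = ⊤) :
    ComplementedLattice σ.invtSubmodule := by
  let e := σ.mapSubmodule
  have hatoms : sSup {P : Submodule (MonoidAlgebra k H) σ.asModule | IsAtom P} = ⊤ := by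
    rw [eq_top_iff, ← e.symm.le_iff_le, map_top, ← Subtype.coe_le_coe,
      invtSubmodule.coe_top, ← h]
    exact iSup₂_le fun W hW =>
      Subtype.coe_le_coe.2 (e.le_symm_apply.2 (le_sSup ((e.isAtom_iff W).2 hW)))
  have := complementedLattice_of_sSup_atoms_eq_top hatoms
  exact e.symm.complementedLattice

section Normal

variable {k G V : Type*} [CommSemiring k] [Group G] [AddCommMonoid V] [Module k V]
  (ρ : Representation k G V) {H : Subgroup G}

variable {ρ} in
theorem mem_invtSubmodule_comp_subtype_iff {W : Submodule k V} :
    W ∈ invtSubmodule (ρ.comp H.subtype) ↔ ∀ h ∈ H, ∀ v ∈ W, ρ h v ∈ W := by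
  simp [mem_invtSubmodule, Module.End.mem_invtSubmodule_iff_forall_mem_of_mem]

theorem map_inv_map (g : G) (W : Submodule k V) : (W.map (ρ g)).map (ρ g⁻¹) = W := by
  rw [← Submodule.map_comp, ← Module.End.mul_eq_comp, ← map_mul, inv_mul_cancel, map_one,
    Module.End.one_eq_id, Submodule.map_id]

theorem map_mem_invtSubmodule_comp_subtype [H.Normal] (g : G) {W : Submodule k V}
    (hW : W ∈ invtSubmodule (ρ.comp H.subtype)) :
    W.map (ρ g) ∈ invtSubmodule (ρ.comp H.subtype) := by
  rw [mem_invtSubmodule_comp_subtype_iff] at hW ⊢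
  rintro h hh - ⟨w, hw, rfl⟩
  refine ⟨ρ (g⁻¹ * h * g) w, hW _ (by simpa using ‹H.Normal›.conj_mem h hh g⁻¹) w hw, ?_⟩
  simp only [← Module.End.mul_apply, ← map_mul]
  group

noncomputable def conjInvtSubmodule [H.Normal] (g : G) :
    invtSubmodule (ρ.comp H.subtype) ≃o invtSubmodule (ρ.comp H.subtype) where
  toFun W := ⟨(W : Submodule k V).map (ρ g), ρ.map_mem_invtSubmodule_comp_subtype g W.2⟩
  invFun W := ⟨(W : Submodule k V).map (ρ g⁻¹), ρ.map_mem_invtSubmodule_comp_subtype g⁻¹ W.2⟩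
  left_inv W := Subtype.ext (ρ.map_inv_map g W)
  right_inv W := Subtype.ext (by simpa using ρ.map_inv_map g⁻¹ W)
  map_rel_iff' {P Q} := by
    refine ⟨fun hPQ => ?_, fun hPQ => Submodule.map_mono hPQ⟩
    simpa [ρ.map_inv_map] using Submodule.map_mono (f := ρ g⁻¹) hPQ

theorem socle_comp_subtype_mem_invtSubmodule [H.Normal] :
    socle (ρ.comp H.subtype) ∈ ρ.invtSubmodule := by
  refine ρ.mem_invtSubmodule.2 fun g => (Module.End.mem_invtSubmodule_iff_map_le _).2 ?_
  rw [socle]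
  simp only [Submodule.map_iSup]
  exact iSup₂_le fun W hW => le_socle (((ρ.conjInvtSubmodule g).isAtom_iff W).2 hW)

end Normal

end Representation

open Representation in
theorem restriction_to_normal_subgroup_semisimple_general
    {R G V : Type*} [Field R] [Group G] [AddCommGroup V] [Module R V]
    (H : Subgroup G) [H.Normal] (ρ : Representation R G V)
    (hirr : ∀ W : Submodule R V, (∀ g : G, ∀ v ∈ W, ρ g v ∈ W) → W = ⊥ ∨ W = ⊤)
    (hsub : ∃ W : Submodule R V, W ≠ ⊥ ∧ (∀ h ∈ H, ∀ v ∈ W, ρ h v ∈ W) ∧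
      ∀ W' ≤ W, (∀ h ∈ H, ∀ v ∈ W', ρ h v ∈ W') → W' = ⊥ ∨ W' = W) :
    ∀ W : Submodule R V, (∀ h ∈ H, ∀ v ∈ W, ρ h v ∈ W) →
      ∃ W' : Submodule R V, (∀ h ∈ H, ∀ v ∈ W', ρ h v ∈ W') ∧ IsCompl W W' := by
  obtain ⟨W₀, hW₀ne, hW₀inv, hW₀min⟩ := hsub
  rw [← mem_invtSubmodule_comp_subtype_iff] at hW₀inv
  have hW₀atom : IsAtom (⟨W₀, hW₀inv⟩ : invtSubmodule (ρ.comp H.subtype)) :=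
    (invtSubmodule.isAtom_mk_iff hW₀inv).2 ⟨hW₀ne, fun W' hW' hlt =>
      (hW₀min W' hlt.le (mem_invtSubmodule_comp_subtype_iff.1 hW')).resolve_right hlt.ne⟩
  have hsocle : socle (ρ.comp H.subtype) = ⊤ :=
    (hirr _ (ρ.mem_invtSubmodule.1 (socle_comp_subtype_mem_invtSubmodule ρ))).resolve_left
      (ne_bot_of_le_ne_bot hW₀ne (le_socle hW₀atom))
  have := complementedLattice_invtSubmodule_of_socle_eq_top hsocle
  intro W hW
  obtain ⟨W', hW'⟩ := exists_isCompl (⟨W, mem_invtSubmodule_comp_subtype_iff.2 hW⟩ :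
    invtSubmodule (ρ.comp H.subtype))
  exact ⟨W', mem_invtSubmodule_comp_subtype_iff.1 W'.2, invtSubmodule.isCompl_iff.1 hW'⟩

/-- Let `R` be a field, `G` a group, `H` a normal subgroup of `G`, and `V` an irreducible
`R`-linear representation of `G`. If the restriction of `V` to `H` contains an irreducible
`H`-subrepresentation, then the restriction of `V` to `H` is semisimple (every `H`-invariant
subspace admits an `H`-invariant complement). -/
theorem restriction_to_normal_subgroup_semisimple
    {R G V : Type*} [Field R] [Group G] [AddCommGroup V] [Module R V]
    (H : Subgroup G) [H.Normal] (ρ : Representation R G V)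
    (hVne : ∃ v : V, v ≠ 0)
    (hirr : ∀ W : Submodule R V, (∀ g : G, ∀ v ∈ W, ρ g v ∈ W) → W = ⊥ ∨ W = ⊤)
    (hsub : ∃ W : Submodule R V, W ≠ ⊥ ∧ (∀ h ∈ H, ∀ v ∈ W, ρ h v ∈ W) ∧
      ∀ W' ≤ W, (∀ h ∈ H, ∀ v ∈ W', ρ h v ∈ W') → W' = ⊥ ∨ W' = W) :
    ∀ W : Submodule R V, (∀ h ∈ H, ∀ v ∈ W, ρ h v ∈ W) →
      ∃ W' : Submodule R V, (∀ h ∈ H, ∀ v ∈ W', ρ h v ∈ W') ∧ IsCompl W W' :=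
  restriction_to_normal_subgroup_semisimple_general H ρ hirr hsub
end

section
/- Let R be an algebraically closed field, G a finite group (or a group with H of finite index), H a normal subgroup of G with G/H abelian, and π an irreducible R-representation of H. If Π and Π' are irreducible R-representations of G whose restrictions to H both contain π, then Π' ≅ Π ⊗ χ for some character χ: G → R^× that is trivial on H. -/
/-!
Restricted to `H`, the irreducible representation `P` is the sum of the conjugates `P g (f W)`
of the simple `H`-module `π`, hence semisimple; so the copy of `π` in `P` is a direct summand, and
projecting onto it gives a nonzero `H`-map `T : V → V'`. The group `G` acts on `V →ₗ V'` by
`T ↦ P' g ∘ T ∘ P g⁻¹`, fixing the `H`-maps and acting on them through the finite abelian group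
`G ⧸ H`. The span of the orbit of `T` is therefore finite-dimensional and `G` acts on it by
commuting operators, which over an algebraically closed field have a common eigenvector `T₀`.
Its eigenvalues form a character `χ` trivial on `H`, and `T₀` intertwines `P ⊗ χ` with `P'`, so
it is an isomorphism by Schur's lemma.
-/

open Module
open scoped MonoidAlgebra

theorem Submodule.exists_forall_eigenvector_of_commute {K V : Type*} [Field K] [IsAlgClosed K]
    [AddCommGroup V] [Module K V] {s : Set (End K V)} (hs : s.Finite) (U : Submodule K V)
    [FiniteDimensional K U] (hU : U ≠ ⊥) (hsU : ∀ f ∈ s, ∀ u ∈ U, f u ∈ U)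
    (hcomm : ∀ f ∈ s, ∀ g ∈ s, ∀ u ∈ U, f (g u) = g (f u)) :
    ∃ u ∈ U, u ≠ 0 ∧ ∀ f ∈ s, ∃ c : K, f u = c • u := by
  induction s, hs using Set.Finite.induction_on generalizing U with
  | empty =>
    obtain ⟨u, hu, hu0⟩ := U.exists_mem_ne_zero_of_ne_bot hU
    exact ⟨u, hu, hu0, by simp⟩
  | @insert f s _ _ ih =>
    have hfU := hsU f (Set.mem_insert f s)
    have : Nontrivial U := Submodule.nontrivial_iff_ne_bot.mpr hU
    obtain ⟨c, hc⟩ := End.exists_eigenvalue (f.restrict hfU)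
    obtain ⟨u, hu⟩ := hc.exists_hasEigenvector
    let U' := U ⊓ f.eigenspace c
    have hU' : U' ≠ ⊥ := by
      refine (Submodule.ne_bot_iff _).mpr ⟨u, ⟨u.2, ?_⟩, fun h => hu.2 (Subtype.ext h)⟩
      exact End.mem_eigenspace_iff.mpr (congrArg Subtype.val hu.apply_eq_smul)
    obtain ⟨v, ⟨hvU, hvf⟩, hv0, hv⟩ := ih U' hU'
      (fun g hg w hw => ⟨hsU g (Set.mem_insert_of_mem f hg) w hw.1, End.mem_eigenspace_iff.mpr <| by
        rw [hcomm f (Set.mem_insert f s) g (Set.mem_insert_of_mem f hg) w hw.1,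
          End.mem_eigenspace_iff.mp hw.2, map_smul]⟩)
      (fun g hg g' hg' w hw => hcomm g (Set.mem_insert_of_mem f hg) g'
        (Set.mem_insert_of_mem f hg') w hw.1)
    refine ⟨v, hvU, hv0, ?_⟩
    rintro g (rfl | hg)
    · exact ⟨c, End.mem_eigenspace_iff.mp hvf⟩
    · exact hv g hg

namespace Representation

variable {k G G' V V' W : Type*} [Field k] [AddCommGroup V] [Module k V]
  [AddCommGroup V'] [Module k V'] [AddCommGroup W] [Module k W]

theorem isIrreducible_of_forall_eq_bot_or_eq_top [Monoid G] {ρ : Representation k G V}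
    (hne : ∃ v : V, v ≠ 0)
    (hirr : ∀ U : Submodule k V, (∀ g, ∀ v ∈ U, ρ g v ∈ U) → U = ⊥ ∨ U = ⊤) :
    ρ.IsIrreducible where
  exists_pair_ne := ⟨⊥, ⊤, fun h => by
    obtain ⟨v, hv⟩ := hne
    have : (⊥ : Submodule k V) = ⊤ := congrArg Subrepresentation.toSubmodule h
    exact hv ((Submodule.mem_bot k).mp (this ▸ Submodule.mem_top))⟩
  eq_bot_or_eq_top S := (hirr S.toSubmodule S.apply_mem_toSubmodule).imp
    Subrepresentation.ext Subrepresentation.ext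

theorem IsIrreducible.comp_of_surjective [Monoid G] [Monoid G'] {ρ : Representation k G V}
    [ρ.IsIrreducible] {e : G' →* G} (he : Function.Surjective e) :
    IsIrreducible (ρ.comp e) :=
  (OrderIso.isSimpleOrder_iff (α := Subrepresentation ρ) (β := Subrepresentation (ρ.comp e))
    { toFun S := ⟨S.toSubmodule, fun g _ hv => S.apply_mem_toSubmodule (e g) hv⟩
      invFun S := ⟨S.toSubmodule, fun g v hv => by
        obtain ⟨g', rfl⟩ := he g
        exact S.apply_mem_toSubmodule g' hv⟩
      left_inv _ := rfl
      right_inv _ := rfl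
      map_rel_iff' := Iff.rfl }).mp ‹_›

section Restriction

variable [Group G] {H : Subgroup G} [H.Normal] {ρ : Representation k G V}
  {π : Representation k H W}

def IntertwiningMap.conjugate (f : IntertwiningMap π (ρ.comp H.subtype)) (g : G) :
    IntertwiningMap (π.comp (MulAut.conjNormal g⁻¹).toMonoidHom) (ρ.comp H.subtype) :=
  (ρ g ∘ₗ f.toLinearMap).intertwiningMap_of_isIntertwiningMap _ _ fun h w => by
    have : g * (g⁻¹ * h * g⁻¹⁻¹) = h * g := by group
    simp only [LinearMap.comp_apply, MonoidHom.comp_apply, MulEquiv.coe_toMonoidHom,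
      IntertwiningMap.toLinearMap_apply, f.isIntertwining, Subgroup.coe_subtype,
      MulAut.conjNormal_apply, ← Module.End.mul_apply, ← map_mul, this]

theorem isSemisimpleModule_asModule_comp_subtype
    (hρ : ∀ U : Submodule k V, (∀ g, ∀ v ∈ U, ρ g v ∈ U) → U = ⊥ ∨ U = ⊤) [π.IsIrreducible]
    (f : IntertwiningMap π (ρ.comp H.subtype)) (hf : Function.Injective f) :
    IsSemisimpleModule k[H] (asModule (ρ.comp H.subtype)) := by
  let F g := IntertwiningMap.equivLinearMapAsModule _ _ (f.conjugate g)
  have hF : ∀ g, Function.Injective (F g) := fun g => (ρ.apply_bijective g).injective.comp hf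
  refine isSemisimpleModule_of_isSemisimpleModule_submodule' (p := fun g => LinearMap.range (F g))
    (fun g => ?_) ?_
  · have : IsIrreducible (π.comp (MulAut.conjNormal g⁻¹).toMonoidHom) :=
      IsIrreducible.comp_of_surjective (MulEquiv.surjective _)
    have := IsSimpleModule.congr (LinearEquiv.ofInjective (F g) (hF g)).symm
    infer_instance
  · let U := ⨆ g, LinearMap.range (ρ g ∘ₗ f.toLinearMap)
    have hU : U = ⊤ := by
      refine (hρ U fun g v hv => ?_).resolve_left ?_
      · refine Submodule.iSup_induction _ (motive := fun v => ρ g v ∈ U) hv ?_ (by simp) ?_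
        · rintro g' _ ⟨w, rfl⟩
          exact Submodule.mem_iSup_of_mem (g * g') ⟨w, by simp⟩
        · intro _ _ hx hy
          simpa using add_mem hx hy
      · intro hbot
        have := IsSimpleModule.nontrivial k[H] π.asModule
        obtain ⟨w, hw⟩ := exists_ne (0 : π.asModule)
        have hfw : f w ∈ U := Submodule.mem_iSup_of_mem 1 ⟨w, by rw [map_one]; rfl⟩
        rw [hbot, Submodule.mem_bot] at hfw
        exact hw (hf (hfw.trans (map_zero f).symm))
    refine eq_top_iff.mpr fun x _ => ?_
    have hx : asModuleEquiv _ x ∈ U := by rw [hU]; exact Submodule.mem_top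
    refine Submodule.iSup_induction _
      (motive := fun v => (asModuleEquiv _).symm v ∈ ⨆ g, LinearMap.range (F g)) hx ?_
      (zero_mem _) fun _ _ => add_mem
    rintro g _ ⟨w, rfl⟩
    exact Submodule.mem_iSup_of_mem g ⟨w, rfl⟩

open IntertwiningMap in
theorem exists_intertwiningMap_ne_zero_of_common_constituent {ρ' : Representation k G V'}
    (hρ : ∀ U : Submodule k V, (∀ g, ∀ v ∈ U, ρ g v ∈ U) → U = ⊥ ∨ U = ⊤) [π.IsIrreducible]
    (f : IntertwiningMap π (ρ.comp H.subtype)) (hf : Function.Injective f)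
    (f' : IntertwiningMap π (ρ'.comp H.subtype)) (hf' : f' ≠ 0) :
    ∃ T : IntertwiningMap (ρ.comp H.subtype) (ρ'.comp H.subtype), T ≠ 0 := by
  have := isSemisimpleModule_asModule_comp_subtype hρ f hf
  obtain ⟨T, hT⟩ := IsSemisimpleModule.extension_property (equivLinearMapAsModule _ _ f) hf
    (equivLinearMapAsModule _ _ f')
  refine ⟨(equivLinearMapAsModule _ _).symm T, fun h0 =>
    hf' ((equivLinearMapAsModule _ _).injective ?_)⟩
  rw [← hT, (LinearEquiv.symm_apply_eq _).mp h0, map_zero, LinearMap.zero_comp, map_zero]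

end Restriction

section Eigencharacter

variable {M : Type*} [Group G] [AddCommGroup M] [Module k M]

theorem exists_monoidHom_units_of_forall_apply_eq_smul (σ : Representation k G M) {m : M}
    (hm : m ≠ 0) (h : ∀ g, ∃ c : k, σ g m = c • m) :
    ∃ χ : G →* kˣ, ∀ g, σ g m = (χ g : k) • m := by
  choose c hc using h
  have hc_inj := smul_left_injective k hm
  let χ : G →* k :=
    { toFun := c
      map_one' := hc_inj (by simp only [← hc, map_one, Module.End.one_apply, one_smul])
      map_mul' := fun a b => hc_inj <| by
        change c (a * b) • m = (c a * c b) • m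
        rw [← hc, map_mul, Module.End.mul_apply, hc, map_smul, hc, smul_smul, mul_comm] }
  exact ⟨χ.toHomUnits, hc⟩

variable {H : Subgroup G}

theorem apply_eq_self_of_mem_span_orbit [H.Normal] (σ : Representation k G M) {v : M}
    (hv : ∀ h ∈ H, σ h v = v) {y : M} (hy : y ∈ Submodule.span k (Set.range fun g => σ g v)) :
    ∀ h ∈ H, σ h y = y := by
  intro h hh
  induction hy using Submodule.span_induction with
  | mem _ hx =>
    obtain ⟨g, rfl⟩ := hx
    have : σ h (σ g v) = σ g (σ (g⁻¹ * h * g) v) := by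
      simp only [← Module.End.mul_apply, ← map_mul]; group
    rw [this, hv _ (by simpa using Subgroup.Normal.conj_mem ‹_› h hh g⁻¹)]
  | zero => simp
  | add _ _ _ _ hx hy => rw [map_add, hx, hy]
  | smul a _ _ hx => rw [map_smul, hx]

theorem apply_apply_comm_of_fixed (σ : Representation k G M)
    (hab : ∀ g g' : G, g * g' * g⁻¹ * g'⁻¹ ∈ H) {y : M} (hy : ∀ h ∈ H, σ h y = y) (a b : G) :
    σ a (σ b y) = σ b (σ a y) := by
  have : a * b = b * a * (a⁻¹ * b⁻¹ * a * b) := by group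
  rw [← Module.End.mul_apply, ← map_mul, this, map_mul, Module.End.mul_apply,
    hy _ (by simpa using hab a⁻¹ b⁻¹), map_mul, Module.End.mul_apply]

theorem exists_character_eigenvector_of_fixed [IsAlgClosed k] [H.Normal] [H.FiniteIndex]
    (hab : ∀ g g' : G, g * g' * g⁻¹ * g'⁻¹ ∈ H) (σ : Representation k G M) {v : M} (hv0 : v ≠ 0)
    (hv : ∀ h ∈ H, σ h v = v) :
    ∃ χ : G →* kˣ, (∀ h ∈ H, χ h = 1) ∧ ∃ m : M, m ≠ 0 ∧ ∀ g, σ g m = (χ g : k) • m := by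
  set Y := Submodule.span k (Set.range fun g => σ g v)
  have hvY : v ∈ Y := Submodule.subset_span ⟨1, by simp⟩
  have hY_fixed : ∀ y ∈ Y, ∀ h ∈ H, σ h y = y := fun y hy =>
    apply_eq_self_of_mem_span_orbit σ hv hy
  have hY_inv : ∀ g, ∀ y ∈ Y, σ g y ∈ Y := fun g y hy =>
    Submodule.span_mono (by rintro _ ⟨_, ⟨g', rfl⟩, rfl⟩; exact ⟨g * g', by simp⟩)
      (Submodule.apply_mem_span_image_of_mem_span (σ g) hy)
  have hY_out : ∀ g, ∀ y ∈ Y, σ (QuotientGroup.mk g : G ⧸ H).out y = σ g y := by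
    intro g y hy
    obtain ⟨h, hh⟩ := QuotientGroup.mk_out_eq_mul H g
    rw [hh, map_mul, Module.End.mul_apply, hY_fixed y hy h h.2]
  have : FiniteDimensional k Y := FiniteDimensional.span_of_finite k <|
    (Set.finite_range fun q : G ⧸ H => σ q.out v).subset <| by
      rintro _ ⟨g, rfl⟩
      exact ⟨g, hY_out g v hvY⟩
  obtain ⟨m, hmY, hm0, hm⟩ := Y.exists_forall_eigenvector_of_commute
    (Set.finite_range fun q : G ⧸ H => σ q.out) ((Submodule.ne_bot_iff Y).mpr ⟨v, hvY, hv0⟩)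
    (by rintro _ ⟨q, rfl⟩; exact hY_inv _)
    (by rintro _ ⟨a, rfl⟩ _ ⟨b, rfl⟩ y hy; exact apply_apply_comm_of_fixed σ hab (hY_fixed y hy) _ _)
  obtain ⟨χ, hχ⟩ := σ.exists_monoidHom_units_of_forall_apply_eq_smul hm0 fun g => by
    rw [← hY_out g m hmY]
    exact hm _ ⟨_, rfl⟩
  refine ⟨χ, fun h hh => Units.ext <| smul_left_injective k hm0 ?_, m, hm0, hχ⟩
  simp only [← hχ, hY_fixed m hmY h hh, Units.val_one, one_smul]

end Eigencharacter

section Twist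

variable [Group G] {ρ : Representation k G V} {ρ' : Representation k G V'}

theorem linHom_apply_eq_smul_iff {T : V →ₗ[k] V'} {g : G} {c : k} :
    linHom ρ ρ' g T = c • T ↔ ∀ v, T (c • ρ g v) = ρ' g (T v) := by
  refine ⟨fun h v => ?_, fun h => LinearMap.ext fun v => ?_⟩
  · simpa [map_smul] using (congrArg (· (ρ g v)) h).symm
  · simpa [map_smul] using (h (ρ g⁻¹ v)).symm

theorem bijective_of_intertwines_twist
    (hρ : ∀ U : Submodule k V, (∀ g, ∀ v ∈ U, ρ g v ∈ U) → U = ⊥ ∨ U = ⊤)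
    (hρ' : ∀ U : Submodule k V', (∀ g, ∀ v ∈ U, ρ' g v ∈ U) → U = ⊥ ∨ U = ⊤)
    {T : V →ₗ[k] V'} (hT : T ≠ 0) (χ : G → kˣ)
    (hTχ : ∀ g v, T ((χ g : k) • ρ g v) = ρ' g (T v)) : Function.Bijective T := by
  have hker : LinearMap.ker T = ⊥ := by
    refine (hρ _ fun g v hv => ?_).resolve_right fun h => hT (LinearMap.ker_eq_top.mp h)
    have : (χ g : k) • T (ρ g v) = 0 := by rw [← map_smul, hTχ, LinearMap.mem_ker.mp hv, map_zero]
    exact (smul_eq_zero.mp this).resolve_left (χ g).ne_zero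
  have hrange : LinearMap.range T = ⊤ := by
    refine (hρ' _ ?_).resolve_left fun h => hT (LinearMap.range_eq_bot.mp h)
    rintro g _ ⟨v, rfl⟩
    exact ⟨_, hTχ g v⟩
  exact ⟨LinearMap.ker_eq_bot.mp hker, LinearMap.range_eq_top.mp hrange⟩

end Twist

end Representation

open Representation in
theorem twist_by_character_of_common_constituent_general
    {R : Type*} [Field R] [IsAlgClosed R]
    {G : Type*} [Group G] (H : Subgroup G) [H.Normal]
    (hfin : H.index ≠ 0)
    (hab : ∀ g g' : G, g * g' * g⁻¹ * g'⁻¹ ∈ H)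
    {V V' W : Type*} [AddCommGroup V] [Module R V] [AddCommGroup V'] [Module R V']
    [AddCommGroup W] [Module R W]
    (P : Representation R G V) (P' : Representation R G V') (π : Representation R H W)
    (hπne : ∃ w : W, w ≠ 0)
    (hπirr : ∀ U : Submodule R W, (∀ h : H, ∀ w ∈ U, π h w ∈ U) → U = ⊥ ∨ U = ⊤)
    (hPirr : ∀ U : Submodule R V, (∀ g : G, ∀ v ∈ U, P g v ∈ U) → U = ⊥ ∨ U = ⊤)
    (hP'irr : ∀ U : Submodule R V', (∀ g : G, ∀ v ∈ U, P' g v ∈ U) → U = ⊥ ∨ U = ⊤)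
    (hc : ∃ f : W →ₗ[R] V, Function.Injective f ∧
      ∀ (h : H) (w : W), f (π h w) = P (h : G) (f w))
    (hc' : ∃ f : W →ₗ[R] V', Function.Injective f ∧
      ∀ (h : H) (w : W), f (π h w) = P' (h : G) (f w)) :
    ∃ χ : G →* Rˣ, (∀ h ∈ H, χ h = 1) ∧
      ∃ e : V ≃ₗ[R] V', ∀ (g : G) (v : V), e ((χ g : R) • P g v) = P' g (e v) := by
  obtain ⟨f, hf, hfπ⟩ := hc
  obtain ⟨f', hf', hf'π⟩ := hc'
  have : π.IsIrreducible := isIrreducible_of_forall_eq_bot_or_eq_top hπne hπirr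
  have : H.FiniteIndex := ⟨hfin⟩
  have hf'0 : f' ≠ 0 := fun h0 => by
    obtain ⟨w, hw⟩ := hπne
    exact hw (hf' (by simp [h0]))
  obtain ⟨T, hT⟩ := exists_intertwiningMap_ne_zero_of_common_constituent hPirr
    (f.intertwiningMap_of_isIntertwiningMap _ _ hfπ) hf
    (f'.intertwiningMap_of_isIntertwiningMap _ _ hf'π) fun h0 => hf'0 (congrArg (·.toLinearMap) h0)
  have hT_fixed : ∀ h ∈ H, linHom P P' h T.toLinearMap = T.toLinearMap := fun h hh => by
    simpa using (linHom_apply_eq_smul_iff (ρ := P) (ρ' := P') (g := h) (c := 1)).mpr fun v => by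
      rw [one_smul]
      exact T.isIntertwining _ _ ⟨h, hh⟩ v
  obtain ⟨χ, hχH, T₀, hT₀, hχ⟩ := exists_character_eigenvector_of_fixed hab (linHom P P')
    (fun h0 => hT (IntertwiningMap.ext h0)) hT_fixed
  have hT₀χ : ∀ g v, T₀ ((χ g : R) • P g v) = P' g (T₀ v) := fun g =>
    linHom_apply_eq_smul_iff.mp (hχ g)
  exact ⟨χ, hχH, .ofBijective T₀ (bijective_of_intertwines_twist hPirr hP'irr hT₀ _ hT₀χ), hT₀χ⟩

/-- Let `R` be algebraically closed, `H` a normal subgroup of finite index of `G` with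
`G/H` abelian, and `π` an irreducible `R`-representation of `H`. If `P` and `P'` are
irreducible `R`-representations of `G` whose restrictions to `H` both contain `π`, then
`P' ≅ P ⊗ χ` for some character `χ : G → Rˣ` trivial on `H`. -/
theorem twist_by_character_of_common_constituent
    {R : Type*} [Field R] [IsAlgClosed R]
    {G : Type*} [Group G] (H : Subgroup G) [H.Normal]
    (hfin : H.index ≠ 0)
    (hab : ∀ g g' : G, g * g' * g⁻¹ * g'⁻¹ ∈ H)
    {V V' W : Type*} [AddCommGroup V] [Module R V] [AddCommGroup V'] [Module R V']
    [AddCommGroup W] [Module R W]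
    (P : Representation R G V) (P' : Representation R G V') (π : Representation R H W)
    (hπne : ∃ w : W, w ≠ 0)
    (hπirr : ∀ U : Submodule R W, (∀ h : H, ∀ w ∈ U, π h w ∈ U) → U = ⊥ ∨ U = ⊤)
    (hPne : ∃ v : V, v ≠ 0)
    (hPirr : ∀ U : Submodule R V, (∀ g : G, ∀ v ∈ U, P g v ∈ U) → U = ⊥ ∨ U = ⊤)
    (hP'ne : ∃ v : V', v ≠ 0)
    (hP'irr : ∀ U : Submodule R V', (∀ g : G, ∀ v ∈ U, P' g v ∈ U) → U = ⊥ ∨ U = ⊤)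
    (hc : ∃ f : W →ₗ[R] V, Function.Injective f ∧
      ∀ (h : H) (w : W), f (π h w) = P (h : G) (f w))
    (hc' : ∃ f : W →ₗ[R] V', Function.Injective f ∧
      ∀ (h : H) (w : W), f (π h w) = P' (h : G) (f w)) :
    ∃ χ : G →* Rˣ, (∀ h ∈ H, χ h = 1) ∧
      ∃ e : V ≃ₗ[R] V', ∀ (g : G) (v : V), e ((χ g : R) • P g v) = P' g (e v) :=
  twist_by_character_of_common_constituent_general H hfin hab P P' π hπne hπirr hPirr hP'irr hc hc'
end

section
/- Let V be a finite-dimensional vector space over the field with two elements, of dimension d, and for 0 ≤ r the submodule I_r of the module C(V, ℤ) of ℤ-valued functions on V generated by the characteristic functions of the r-dimensional affine subspaces of V. Then for 0 < r < d one has 2·I_{r-1} ⊆ I_r, hence 2^r · C(V, ℤ) ⊆ I_r, and the exponent of the abelian group C(V, ℤ)/I_r is exactly 2^r. -/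
open Classical in
/-- The characteristic function of the affine subspace `v + W` of `V`. -/
noncomputable def affineChar {V : Type*} [AddCommGroup V] [Module (ZMod 2) V]
    (W : Submodule (ZMod 2) V) (v : V) : V → ℤ :=
  fun x => if x - v ∈ W then 1 else 0

/-- The `ℤ`-submodule of `C(V, ℤ)` generated by characteristic functions of `r`-dimensional
affine subspaces of `V`. -/
noncomputable def affineCharSpan {V : Type*} [AddCommGroup V] [Module (ZMod 2) V]
    (r : ℕ) : Submodule ℤ (V → ℤ) :=
  Submodule.span ℤ {f | ∃ (W : Submodule (ZMod 2) V) (v : V),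
    Module.finrank (ZMod 2) W = r ∧ f = affineChar W v}

section Aux

variable {V : Type*} [AddCommGroup V] [Module (ZMod 2) V]

lemma char2_add_self (z : V) : z + z = 0 := by
  have h0 : ((1 : ZMod 2) + 1) = 0 := by decide
  have h : ((1 : ZMod 2) + 1) • z = (0 : ZMod 2) • z := by rw [h0]
  rw [add_smul, one_smul, zero_smul] at h
  exact h

lemma char2_neg (z : V) : -z = z :=
  neg_eq_of_add_eq_zero_right (char2_add_self z)

lemma zmod2_cases (c : ZMod 2) : c = 0 ∨ c = 1 := by revert c; decide

lemma mem_sup_span_iff (W : Submodule (ZMod 2) V) (u y : V) :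
    y ∈ W ⊔ Submodule.span (ZMod 2) {u} ↔ y ∈ W ∨ y + u ∈ W := by
  constructor
  · intro h
    rw [Submodule.mem_sup] at h
    obtain ⟨a, ha, b, hb, rfl⟩ := h
    rw [Submodule.mem_span_singleton] at hb
    obtain ⟨c, rfl⟩ := hb
    rcases zmod2_cases c with rfl | rfl
    · left; simpa using ha
    · right
      have : a + (1 : ZMod 2) • u + u = a := by
        rw [one_smul, add_assoc, char2_add_self, add_zero]
      rwa [this]
  · rintro (h | h)
    · exact Submodule.mem_sup_left h
    · have : y = (y + u) + u := by rw [add_assoc, char2_add_self, add_zero]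
      rw [this]
      exact Submodule.add_mem _ (Submodule.mem_sup_left h)
        (Submodule.mem_sup_right (Submodule.mem_span_singleton_self u))

variable [Module.Finite (ZMod 2) V]

lemma finrank_sup_span (W : Submodule (ZMod 2) V) (u : V) (hu : u ∉ W) :
    Module.finrank (ZMod 2) ↥(W ⊔ Submodule.span (ZMod 2) {u})
      = Module.finrank (ZMod 2) W + 1 := by
  have h0 : u ≠ 0 := fun h => hu (h ▸ W.zero_mem)
  have hinf : W ⊓ Submodule.span (ZMod 2) {u} = ⊥ := by
    rw [eq_bot_iff]
    intro x hx
    have hxW : x ∈ W := hx.1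
    obtain ⟨c, rfl⟩ := Submodule.mem_span_singleton.mp hx.2
    rcases zmod2_cases c with rfl | rfl
    · simp
    · exact absurd (by simpa using hxW) hu
  have h := Submodule.finrank_sup_add_finrank_inf_eq W (Submodule.span (ZMod 2) {u})
  rw [hinf, finrank_bot, finrank_span_singleton h0] at h
  omega

lemma exists_notMem_of_finrank_lt (W : Submodule (ZMod 2) V)
    (h : Module.finrank (ZMod 2) W < Module.finrank (ZMod 2) V) : ∃ u, u ∉ W := by
  by_contra hc
  push_neg at hc
  have : W = ⊤ := Submodule.eq_top_iff'.2 hc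
  rw [this, finrank_top] at h
  omega

lemma two_smul_affineChar_mem (W : Submodule (ZMod 2) V) (v : V) (s : ℕ)
    (hW : Module.finrank (ZMod 2) W = s) (hs : s + 1 < Module.finrank (ZMod 2) V) :
    (2 : ℤ) • affineChar W v ∈ affineCharSpan (V := V) (s + 1) := by
  obtain ⟨u1, hu1⟩ := exists_notMem_of_finrank_lt W (by omega)
  set W1 := W ⊔ Submodule.span (ZMod 2) {u1} with hW1def
  have hW1 : Module.finrank (ZMod 2) W1 = s + 1 := by
    rw [hW1def, finrank_sup_span W u1 hu1, hW]
  obtain ⟨u2, hu2⟩ := exists_notMem_of_finrank_lt W1 (by omega)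
  have hu2W : u2 ∉ W := fun h => hu2 (Submodule.mem_sup_left h)
  have hu12W : u1 + u2 ∉ W := by
    intro h
    apply hu2
    rw [hW1def, mem_sup_span_iff]
    right
    rwa [show u2 + u1 = u1 + u2 from add_comm _ _]
  set W2 := W ⊔ Submodule.span (ZMod 2) {u2} with hW2def
  set W3 := W ⊔ Submodule.span (ZMod 2) {u1 + u2} with hW3def
  have hW2 : Module.finrank (ZMod 2) W2 = s + 1 := by
    rw [hW2def, finrank_sup_span W u2 hu2W, hW]
  have hW3 : Module.finrank (ZMod 2) W3 = s + 1 := by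
    rw [hW3def, finrank_sup_span W _ hu12W, hW]
  have hfun : (2 : ℤ) • affineChar W v
      = affineChar W1 v + affineChar W2 v - affineChar W3 (v + u1) := by
    funext x
    simp only [affineChar, Pi.add_apply, Pi.sub_apply, Pi.smul_apply, smul_eq_mul]
    have e3 : x - (v + u1) = (x - v) + u1 := by
      rw [sub_add_eq_sub_sub, sub_eq_add_neg (x - v) u1, char2_neg]
    set y := x - v with hy
    rw [e3, hW1def, hW2def, hW3def, mem_sup_span_iff, mem_sup_span_iff, mem_sup_span_iff]
    have e4 : y + u1 + (u1 + u2) = y + u2 := by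
      have : y + u1 + (u1 + u2) = y + (u1 + u1) + u2 := by abel
      rw [this, char2_add_self, add_zero]
    rw [e4]
    by_cases ha : y ∈ W
    · have hb : y + u1 ∉ W := by
        intro hb
        apply hu1
        have := W.add_mem ha hb
        rwa [show y + (y + u1) = u1 by rw [← add_assoc, char2_add_self, zero_add]] at this
      have hc : y + u2 ∉ W := by
        intro hc
        apply hu2W
        have := W.add_mem ha hc
        rwa [show y + (y + u2) = u2 by rw [← add_assoc, char2_add_self, zero_add]] at this
      simp [ha, hb, hc]
    · by_cases hb : y + u1 ∈ W
      · have hc : y + u2 ∉ W := by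
          intro hc
          apply hu12W
          have := W.add_mem hb hc
          rwa [show y + u1 + (y + u2) = u1 + u2 by
            rw [show y + u1 + (y + u2) = (y + y) + (u1 + u2) by abel, char2_add_self, zero_add]]
            at this
        simp [ha, hb, hc]
      · by_cases hc : y + u2 ∈ W <;> simp [ha, hb, hc]
  rw [hfun]
  exact Submodule.sub_mem _
    (Submodule.add_mem _ (Submodule.subset_span ⟨W1, v, hW1, rfl⟩)
      (Submodule.subset_span ⟨W2, v, hW2, rfl⟩))
    (Submodule.subset_span ⟨W3, v + u1, hW3, rfl⟩)

lemma affineCharSpan_step (s : ℕ) (hs : s + 1 < Module.finrank (ZMod 2) V) :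
    ∀ f ∈ affineCharSpan (V := V) s, (2 : ℤ) • f ∈ affineCharSpan (V := V) (s + 1) := by
  intro f hf
  have hle : affineCharSpan (V := V) s ≤
      (affineCharSpan (V := V) (s + 1)).comap
        ((2 : ℤ) • (LinearMap.id : (V → ℤ) →ₗ[ℤ] V → ℤ)) := by
    rw [affineCharSpan, Submodule.span_le]
    rintro g ⟨W, v, hW, rfl⟩
    refine Submodule.mem_comap.mpr ?_
    show (2 : ℤ) • affineChar W v ∈ _
    exact two_smul_affineChar_mem W v s hW hs
  exact Submodule.mem_comap.mp (hle hf)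

lemma affineCharSpan_zero_eq_top : affineCharSpan (V := V) 0 = ⊤ := by
  haveI : Finite V := Module.finite_of_finite (ZMod 2)
  haveI : Fintype V := Fintype.ofFinite V
  rw [eq_top_iff]
  intro f _
  have hf : f = ∑ v : V, f v • affineChar (⊥ : Submodule (ZMod 2) V) v := by
    classical
    funext x
    rw [Finset.sum_apply]
    have hterm : ∀ v : V, (f v • affineChar (⊥ : Submodule (ZMod 2) V) v) x
        = if v = x then f v else 0 := by
      intro v
      simp only [Pi.smul_apply, affineChar, Submodule.mem_bot (ZMod 2), sub_eq_zero,
        smul_eq_mul, mul_ite, mul_one, mul_zero]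
      exact if_congr ⟨fun h => h.symm, fun h => h.symm⟩ rfl rfl
    rw [Finset.sum_congr rfl fun v _ => hterm v, Finset.sum_ite_eq' Finset.univ x f]
    simp
  rw [hf]
  exact Submodule.sum_mem _ fun v _ =>
    Submodule.smul_mem _ _ (Submodule.subset_span ⟨⊥, v, finrank_bot _ _, rfl⟩)

lemma dvd_sum_of_mem [Fintype V] (r : ℕ) :
    ∀ g ∈ affineCharSpan (V := V) r, ((2 : ℤ) ^ r) ∣ ∑ x, g x := by
  intro g hg
  induction hg using Submodule.span_induction with
  | mem g hgm =>
    obtain ⟨W, v, hW, rfl⟩ := hgm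
    classical
    have h1 : ∑ x : V, affineChar W v x = ∑ y : V, (if y ∈ W then (1 : ℤ) else 0) :=
      Fintype.sum_equiv (Equiv.subRight v) _ _ (fun x => rfl)
    have h2 : ∑ y : V, (if y ∈ W then (1 : ℤ) else 0)
        = ((Finset.univ.filter (fun y => y ∈ W)).card : ℤ) := by
      rw [Finset.sum_boole]
    have h3 : (Finset.univ.filter (fun y => y ∈ W)).card = Fintype.card W :=
      (Fintype.card_subtype _).symm
    have h4 : Fintype.card W = 2 ^ r := by
      rw [Module.card_eq_pow_finrank (K := ZMod 2) (V := W), ZMod.card, hW]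
    rw [h1, h2, h3, h4]
    push_cast
    rfl
  | zero => simp
  | add f g _ _ ihf ihg =>
    have : ∑ x : V, (f + g) x = (∑ x : V, f x) + ∑ x : V, g x := by
      simp [Finset.sum_add_distrib]
    rw [this]
    exact dvd_add ihf ihg
  | smul c f _ ih =>
    have : ∑ x : V, (c • f) x = c * ∑ x : V, f x := by
      simp [Finset.mul_sum]
    rw [this]
    exact ih.mul_left c

end Aux

/-- For `V` a `d`-dimensional `𝔽₂`-vector space and `0 < r < d`:
`2 · I_{r-1} ⊆ I_r`, hence `2^r · C(V, ℤ) ⊆ I_r`, and the exponent of `C(V, ℤ)/I_r`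
is exactly `2^r`. -/
theorem affineCharSpan_exponent {V : Type*} [AddCommGroup V] [Module (ZMod 2) V]
    [Module.Finite (ZMod 2) V] {d r : ℕ}
    (hd : Module.finrank (ZMod 2) V = d) (hr0 : 0 < r) (hrd : r < d) :
    (∀ f ∈ affineCharSpan (V := V) (r - 1), (2 : ℤ) • f ∈ affineCharSpan (V := V) r) ∧
    (∀ f : V → ℤ, ((2 : ℤ) ^ r) • f ∈ affineCharSpan (V := V) r) ∧
    (∀ n : ℕ, 0 < n → (∀ f : V → ℤ, (n : ℤ) • f ∈ affineCharSpan (V := V) r) →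
      2 ^ r ∣ n) := by
  haveI : Finite V := Module.finite_of_finite (ZMod 2)
  haveI : Fintype V := Fintype.ofFinite V
  have key : ∀ k, k ≤ r → ∀ f : V → ℤ, ((2 : ℤ) ^ k) • f ∈ affineCharSpan (V := V) k := by
    intro k
    induction k with
    | zero =>
      intro _ f
      rw [pow_zero, one_smul, affineCharSpan_zero_eq_top]
      exact Submodule.mem_top
    | succ k ih =>
      intro hk f
      have h1 := ih (by omega) f
      have h2 := affineCharSpan_step (V := V) k (by omega) _ h1
      rwa [smul_smul, show (2 : ℤ) * 2 ^ k = 2 ^ (k + 1) by ring] at h2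
  refine ⟨?_, key r le_rfl, ?_⟩
  · intro f hf
    have h := affineCharSpan_step (V := V) (r - 1) (by omega) f hf
    rwa [show r - 1 + 1 = r by omega] at h
  · intro n _ hmem
    have h := dvd_sum_of_mem (V := V) r _ (hmem (affineChar (⊥ : Submodule (ZMod 2) V) 0))
    have hs : ∑ x : V, ((n : ℤ) • affineChar (⊥ : Submodule (ZMod 2) V) 0) x = n := by
      classical
      have hterm : ∀ x : V, ((n : ℤ) • affineChar (⊥ : Submodule (ZMod 2) V) 0) x
          = if x = 0 then (n : ℤ) else 0 := by
        intro x
        simp [affineChar, Submodule.mem_bot (ZMod 2), sub_eq_zero]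
      rw [Finset.sum_congr rfl fun x _ => hterm x,
        Finset.sum_ite_eq' Finset.univ 0 (fun _ => (n : ℤ))]
      simp
    rw [hs] at h
    exact_mod_cast h
end

section
/- Let F be a field. Every nonzero nilpotent matrix in M₂(F) is conjugate by an element of SL₂(F) to a matrix of the form [[0,0],[c,0]] with c ∈ F^×, and two matrices [[0,0],[c,0]] and [[0,0],[c',0]] (c, c' ∈ F^×) are conjugate by an element of SL₂(F) if and only if c/c' is a square in F^×. Hence the SL₂(F)-conjugacy classes of nonzero nilpotent 2×2 matrices are in bijection with F^×/(F^×)². -/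
/-!
A nonzero `X = [[a, b], [c, d]]` with `X² = 0` has trace and determinant zero. If `c ≠ 0`, the
transvection `[[1, -a/c], [0, 1]]` clears the diagonal and leaves `[[0, 0], [c, 0]]`; if `c = 0`,
then `X = [[0, b], [0, 0]]` and the Weyl element `[[0, -1], [1, 0]]` turns it into
`[[0, 0], [-b, 0]]`. Comparing entries in `g [[0, 0], [c, 0]] = [[0, 0], [c', 0]] g` forces
`g = [[s⁻¹, *], [0, s]]` and `c' = s² c`; conversely `diag(a, a⁻¹)` rescales `c` to `c / a²`.
-/

open scoped MatrixGroups

theorem Matrix.of_fin_two_inj {α : Type*} {a b c d a' b' c' d' : α} :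
    !![a, b; c, d] = !![a', b'; c', d'] ↔ a = a' ∧ b = b' ∧ c = c' ∧ d = d' := by
  simp [and_assoc]

theorem Matrix.zero_fin_two {α : Type*} [Zero α] :
    (0 : Matrix (Fin 2) (Fin 2) α) = !![0, 0; 0, 0] :=
  eta_fin_two 0

namespace Matrix.SpecialLinearGroup

theorem mul_mul_inv_eq_iff {n R : Type*} [Fintype n] [DecidableEq n] [CommRing R]
    (g : SpecialLinearGroup n R) (A B : Matrix n n R) :
    (g : Matrix n n R) * A * (g⁻¹ : SpecialLinearGroup n R) = B ↔
      (g : Matrix n n R) * A = B * (g : Matrix n n R) :=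
  Units.mul_inv_eq_iff_eq_mul (toGL g)

section SL2

variable {F : Type*} [Field F]

local notation:1024 "↑ₘ" g:1024 => ((g : SL(2, F)) : Matrix (Fin 2) (Fin 2) F)

lemma transvection_coe_fin_two (b : F) : ↑ₘ(transvection zero_ne_one b) = !![1, b; 0, 1] := by
  ext i j; fin_cases i <;> fin_cases j <;> simp [transvection_coe]

def weyl : SL(2, F) := ⟨!![0, -1; 1, 0], by simp [det_fin_two_of]⟩

theorem transvection_conj_eq_lower {a b c : F} (hc : c ≠ 0) (h : a * a + b * c = 0) :
    ↑ₘ(transvection zero_ne_one (-a / c)) * !![a, b; c, -a] *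
      ↑ₘ(transvection zero_ne_one (-a / c))⁻¹ = !![0, 0; c, 0] := by
  rw [mul_mul_inv_eq_iff, transvection_coe_fin_two, mul_fin_two, mul_fin_two, of_fin_two_inj]
  refine ⟨by field_simp; ring, ?_, by ring, by field_simp; ring⟩
  field_simp
  linear_combination h

theorem weyl_conj_eq_lower (b : F) : ↑ₘweyl * !![0, b; 0, 0] * ↑ₘweyl⁻¹ = !![0, 0; -b, 0] := by
  rw [mul_mul_inv_eq_iff, weyl, coe_mk, mul_fin_two, mul_fin_two]
  simp

theorem diag2_conj_lower_eq {a : F} (ha : a ≠ 0) (c : F) :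
    ↑ₘ(diag2 a ha) * !![0, 0; c, 0] * ↑ₘ(diag2 a ha)⁻¹ = !![0, 0; c / a ^ 2, 0] := by
  rw [mul_mul_inv_eq_iff, diag2_coe', mul_fin_two, mul_fin_two, of_fin_two_inj]
  refine ⟨by ring, by ring, by field_simp; ring, by ring⟩

theorem sq_mul_eq_of_mul_lower_eq {c c' : F} (hc : c ≠ 0) (g : SL(2, F))
    (h : ↑ₘg * !![0, 0; c, 0] = !![0, 0; c', 0] * ↑ₘg) :
    g 1 1 ^ 2 * c = c' := by
  induction g using fin_two_induction with | h p q r s hdet =>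
  rw [coe_mk, mul_fin_two, mul_fin_two, of_fin_two_inj] at h
  obtain ⟨h00, -, h10, -⟩ := h
  obtain rfl : q = 0 := by simpa [hc] using h00
  show s ^ 2 * c = c'
  linear_combination s * h10 + c' * hdet

theorem exists_conj_eq_lower_of_mul_self_eq_zero {X : Matrix (Fin 2) (Fin 2) F} (hX : X ≠ 0)
    (hX2 : X * X = 0) : ∃ (g : SL(2, F)) (c : Fˣ), ↑ₘg * X * ↑ₘg⁻¹ = !![0, 0; (c : F), 0] := by
  obtain ⟨a, b, c, d, rfl⟩ : ∃ a b c d, X = !![a, b; c, d] := ⟨_, _, _, _, eta_fin_two X⟩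
  rw [mul_fin_two, zero_fin_two, of_fin_two_inj] at hX2
  obtain ⟨h00, -, h10, h11⟩ := hX2
  by_cases hc : c = 0
  · subst hc
    obtain rfl : a = 0 := by simpa using h00
    obtain rfl : d = 0 := by simpa using h11
    have hb : b ≠ 0 := by rintro rfl; exact hX zero_fin_two.symm
    exact ⟨weyl, Units.mk0 (-b) (neg_ne_zero.mpr hb), weyl_conj_eq_lower b⟩
  · obtain rfl : d = -a := by
      have : c * (a + d) = 0 := by linear_combination h10
      linear_combination (mul_eq_zero.mp this).resolve_left hc
    exact ⟨_, Units.mk0 c hc, transvection_conj_eq_lower hc h00⟩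

theorem exists_conj_lower_eq_lower_iff (c c' : Fˣ) :
    (∃ g : SL(2, F), ↑ₘg * !![0, 0; (c : F), 0] * ↑ₘg⁻¹ = !![0, 0; (c' : F), 0]) ↔
      ∃ a : Fˣ, a ^ 2 = c / c' := by
  constructor
  · rintro ⟨g, hg⟩
    have hs := sq_mul_eq_of_mul_lower_eq c.ne_zero g ((mul_mul_inv_eq_iff _ _ _).mp hg)
    have hs0 : g 1 1 ≠ 0 := by
      rintro h
      exact c'.ne_zero (by simp [← hs, h])
    refine ⟨(Units.mk0 _ hs0)⁻¹, Units.ext ?_⟩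
    rw [Units.val_pow_eq_pow_val, Units.val_inv_eq_inv_val, Units.val_mk0, Units.val_div_eq_div_val,
      ← hs]
    field_simp
  · rintro ⟨a, ha⟩
    refine ⟨diag2 a a.ne_zero, ?_⟩
    rw [diag2_conj_lower_eq, ← Units.val_pow_eq_pow_val, ha]
    simp

end SL2

end Matrix.SpecialLinearGroup

/-- Every nonzero nilpotent matrix in `M₂(F)` is `SL₂(F)`-conjugate to `[[0,0],[c,0]]` with
`c ∈ F^×`, and `[[0,0],[c,0]]`, `[[0,0],[c',0]]` are `SL₂(F)`-conjugate if and only if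
`c/c'` is a square in `F^×`. Hence `SL₂(F)`-conjugacy classes of nonzero nilpotent `2×2`
matrices correspond to `F^×/(F^×)²`. -/
theorem sl2_conjugacy_of_nilpotent {F : Type*} [Field F] :
    (∀ X : Matrix (Fin 2) (Fin 2) F, X ≠ 0 → X * X = 0 →
      ∃ (g : Matrix.SpecialLinearGroup (Fin 2) F) (c : Fˣ),
        (g : Matrix (Fin 2) (Fin 2) F) * X * ((g⁻¹ : Matrix.SpecialLinearGroup (Fin 2) F) :
          Matrix (Fin 2) (Fin 2) F) = !![0, 0; (c : F), 0]) ∧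
    (∀ c c' : Fˣ,
      (∃ g : Matrix.SpecialLinearGroup (Fin 2) F,
        (g : Matrix (Fin 2) (Fin 2) F) * !![0, 0; (c : F), 0] *
          ((g⁻¹ : Matrix.SpecialLinearGroup (Fin 2) F) : Matrix (Fin 2) (Fin 2) F)
          = !![0, 0; ((c' : Fˣ) : F), 0]) ↔ ∃ a : Fˣ, a ^ 2 = c / c') :=
  ⟨fun _ hX hX2 => Matrix.SpecialLinearGroup.exists_conj_eq_lower_of_mul_self_eq_zero hX hX2,
    Matrix.SpecialLinearGroup.exists_conj_lower_eq_lower_iff⟩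
end

section
/- Let R be a field and u ∈ R^× with u ≠ 1. Consider the set C = {A ∈ GL₂(R) : A·diag(u,1)·A⁻¹ ∈ R^×·diag(u,1)}. If u² ≠ 1, then C is exactly the set of invertible diagonal matrices. If u² = 1 (i.e., u = −1 ≠ 1), then C is exactly the union of the invertible diagonal matrices and the invertible antidiagonal matrices. -/
/-- Let `u ∈ R^×` with `u ≠ 1`, and consider invertible `A` with
`A·diag(u,1)·A⁻¹ ∈ R^×·diag(u,1)`. If `u² ≠ 1` such `A` are exactly the invertible diagonal
matrices; if `u² = 1` they are exactly the invertible diagonal together with the invertible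
antidiagonal matrices. -/
theorem conjugating_diag_u_one {R : Type*} [Field R] (u : Rˣ) (hu : (u : R) ≠ 1)
    (A : Matrix (Fin 2) (Fin 2) R) (hA : IsUnit A) :
    (((u : R) ^ 2 ≠ 1 →
      ((∃ c : Rˣ, A * !![(u : R), 0; 0, 1] = (c : R) • (!![(u : R), 0; 0, 1] * A)) ↔
        (A 0 1 = 0 ∧ A 1 0 = 0))) ∧
    ((u : R) ^ 2 = 1 →
      ((∃ c : Rˣ, A * !![(u : R), 0; 0, 1] = (c : R) • (!![(u : R), 0; 0, 1] * A)) ↔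
        ((A 0 1 = 0 ∧ A 1 0 = 0) ∨ (A 0 0 = 0 ∧ A 1 1 = 0))))) := by
  have hdet : A 0 0 * A 1 1 - A 0 1 * A 1 0 ≠ 0 := by
    rw [Matrix.isUnit_iff_isUnit_det, Matrix.det_fin_two, isUnit_iff_ne_zero] at hA
    exact hA
  have hune : (u : R) ≠ 0 := Units.ne_zero u
  have key : ∀ c : R, (A * !![(u : R), 0; 0, 1] = c • (!![(u : R), 0; 0, 1] * A)) ↔
      (A 0 0 * u = c * (u * A 0 0) ∧ A 0 1 = c * (u * A 0 1) ∧
       A 1 0 * u = c * A 1 0 ∧ A 1 1 = c * A 1 1) := by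
    intro c
    rw [← Matrix.ext_iff]
    simp [Fin.forall_fin_two, Matrix.mul_apply, Fin.sum_univ_two, Matrix.vecMul,
      dotProduct]
    tauto
  -- forward direction when A 1 1 ≠ 0 : A is diagonal
  have diagcase : ∀ c : R, A 1 1 ≠ 0 →
      (A 0 0 * u = c * (u * A 0 0) ∧ A 0 1 = c * (u * A 0 1) ∧
       A 1 0 * u = c * A 1 0 ∧ A 1 1 = c * A 1 1) → A 0 1 = 0 ∧ A 1 0 = 0 := by
    intro c h11 ⟨h1, h2, h3, h4⟩
    have hc1 : c = 1 := mul_right_cancel₀ h11 (by rw [one_mul, ← h4])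
    subst hc1
    constructor
    · have h : ((u : R) - 1) * A 0 1 = 0 := by linear_combination -h2
      rcases mul_eq_zero.1 h with h | h
      · exact absurd (sub_eq_zero.1 h) hu
      · exact h
    · have h : ((u : R) - 1) * A 1 0 = 0 := by linear_combination h3
      rcases mul_eq_zero.1 h with h | h
      · exact absurd (sub_eq_zero.1 h) hu
      · exact h
  constructor
  · intro hu2
    constructor
    · rintro ⟨c, hc⟩
      rw [key] at hc
      by_cases h11 : A 1 1 = 0
      · exfalso
        obtain ⟨h1, h2, h3, h4⟩ := hc
        by_cases h00 : A 0 0 = 0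
        · have h01 : A 0 1 ≠ 0 := fun h => hdet (by rw [h00, h11, h]; ring)
          have h10 : A 1 0 ≠ 0 := fun h => hdet (by rw [h00, h11, h]; ring)
          have hcu : (c : R) * u = 1 := by
            have h : ((c : R) * u - 1) * A 0 1 = 0 := by linear_combination -h2
            rcases mul_eq_zero.1 h with h | h
            · exact sub_eq_zero.1 h
            · exact absurd h h01
          have hcc : (c : R) = u := by
            have h : ((u : R) - c) * A 1 0 = 0 := by linear_combination h3
            rcases mul_eq_zero.1 h with h | h
            · exact (sub_eq_zero.1 h).symm
            · exact absurd h h10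
          rw [hcc] at hcu
          exact hu2 (by rw [sq]; exact hcu)
        · have hc1 : (c : R) = 1 := by
            have h : (1 - (c : R)) * ((u : R) * A 0 0) = 0 := by linear_combination h1
            rcases mul_eq_zero.1 h with h | h
            · exact (sub_eq_zero.1 h).symm
            · exact absurd h (mul_ne_zero hune h00)
          rw [hc1] at h2
          have h : ((u : R) - 1) * A 0 1 = 0 := by linear_combination -h2
          rcases mul_eq_zero.1 h with h | h
          · exact hu (sub_eq_zero.1 h)
          · exact hdet (by rw [h11, h]; ring)
      · exact diagcase c h11 hc
    · rintro ⟨h01, h10⟩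
      exact ⟨1, (key 1).2 ⟨by ring, by rw [h01]; ring, by rw [h10]; ring, by ring⟩⟩
  · intro hu2
    constructor
    · rintro ⟨c, hc⟩
      rw [key] at hc
      by_cases h11 : A 1 1 = 0
      · right
        obtain ⟨h1, h2, h3, h4⟩ := hc
        refine ⟨?_, h11⟩
        by_contra h00
        have hc1 : (c : R) = 1 := by
          have h : (1 - (c : R)) * ((u : R) * A 0 0) = 0 := by linear_combination h1
          rcases mul_eq_zero.1 h with h | h
          · exact (sub_eq_zero.1 h).symm
          · exact absurd h (mul_ne_zero hune h00)
        rw [hc1] at h2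
        have h : ((u : R) - 1) * A 0 1 = 0 := by linear_combination -h2
        rcases mul_eq_zero.1 h with h | h
        · exact hu (sub_eq_zero.1 h)
        · exact hdet (by rw [h11, h]; ring)
      · exact Or.inl (diagcase c h11 hc)
    · rintro (⟨h01, h10⟩ | ⟨h00, h11⟩)
      · exact ⟨1, (key 1).2 ⟨by ring, by rw [h01]; ring, by rw [h10]; ring, by ring⟩⟩
      · refine ⟨u, (key u).2 ⟨by rw [h00]; ring, ?_, by ring, by rw [h11]; ring⟩⟩
        have : (u : R) * ((u : R) * A 0 1) = A 0 1 := by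
          rw [← mul_assoc, ← sq, hu2, one_mul]
        rw [this]
end

section
/- Let Y = [[0,0],[1,0]] ∈ M₂(ℤ_p) and let i ≥ 1. The orbit of Y under conjugation by the congruence subgroup K_i = 1 + p^i M₂(ℤ_p) of GL₂(ℤ_p) is exactly the set of nilpotent matrices in the coset Y + p^i M₂(ℤ_p). -/
private lemma padic_unit_one_add {p : ℕ} [Fact p.Prime] {i : ℕ} (hi : 1 ≤ i) (t : ℤ_[p]) :
    IsUnit (1 + (p : ℤ_[p]) ^ i * t) := by
  have h : (1 : ℤ_[p]) + (p : ℤ_[p]) ^ i * t = 1 - (-((p : ℤ_[p]) ^ i * t)) := by ring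
  rw [h]
  apply IsLocalRing.isUnit_one_sub_self_of_mem_nonunits
  rw [mem_nonunits_iff, PadicInt.not_isUnit_iff, norm_neg, norm_mul]
  have hp : (1 : ℝ) < (p : ℝ) := by
    exact_mod_cast (Fact.out : p.Prime).one_lt
  have h1 : ‖(p : ℤ_[p]) ^ i‖ < 1 := by
    rw [PadicInt.norm_p_pow]
    have : ((p : ℝ) ^ (-(i : ℤ))) = ((p : ℝ) ^ i)⁻¹ := by
      rw [zpow_neg, zpow_natCast]
    rw [this, inv_lt_one_iff₀]
    right
    exact one_lt_pow₀ hp (by omega)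
  calc ‖(p : ℤ_[p]) ^ i‖ * ‖t‖ ≤ ‖(p : ℤ_[p]) ^ i‖ * 1 :=
        mul_le_mul_of_nonneg_left t.norm_le_one (norm_nonneg _)
    _ = ‖(p : ℤ_[p]) ^ i‖ := mul_one _
    _ < 1 := h1

/-- Let `Y = [[0,0],[1,0]] ∈ M₂(ℤ_p)` and `i ≥ 1`. The orbit of `Y` under conjugation by
the congruence subgroup `K_i = 1 + pⁱM₂(ℤ_p)` is exactly the set of nilpotent matrices in
`Y + pⁱM₂(ℤ_p)`. -/
theorem congruence_orbit_of_nilpotent (p : ℕ) [Fact p.Prime] (i : ℕ) (hi : 1 ≤ i)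
    (N : Matrix (Fin 2) (Fin 2) ℤ_[p]) :
    (∃ u : (Matrix (Fin 2) (Fin 2) ℤ_[p])ˣ,
        (∃ X : Matrix (Fin 2) (Fin 2) ℤ_[p],
          (u : Matrix (Fin 2) (Fin 2) ℤ_[p]) = 1 + (p : ℤ_[p]) ^ i • X) ∧
        N = (u : Matrix (Fin 2) (Fin 2) ℤ_[p]) * !![0, 0; 1, 0] *
          ((u⁻¹ : (Matrix (Fin 2) (Fin 2) ℤ_[p])ˣ) : Matrix (Fin 2) (Fin 2) ℤ_[p])) ↔
    (N * N = 0 ∧ ∃ X : Matrix (Fin 2) (Fin 2) ℤ_[p],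
      N = !![0, 0; 1, 0] + (p : ℤ_[p]) ^ i • X) := by
  have hY2 : (!![0, 0; 1, 0] : Matrix (Fin 2) (Fin 2) ℤ_[p]) * !![0, 0; 1, 0] = 0 := by
    ext a b
    fin_cases a <;> fin_cases b <;>
      simp [Matrix.mul_apply, Fin.sum_univ_two]
  constructor
  · rintro ⟨u, ⟨X, hu⟩, hN⟩
    set U : Matrix (Fin 2) (Fin 2) ℤ_[p] := ↑u with hU
    set V : Matrix (Fin 2) (Fin 2) ℤ_[p] :=
      ((u⁻¹ : (Matrix (Fin 2) (Fin 2) ℤ_[p])ˣ) : Matrix (Fin 2) (Fin 2) ℤ_[p]) with hV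
    have hui : V * U = 1 := u.inv_mul
    have huiv : U * V = 1 := u.mul_inv
    set Y : Matrix (Fin 2) (Fin 2) ℤ_[p] := !![0, 0; 1, 0] with hYdef
    constructor
    · have h : N * N = U * (Y * ((V * U) * Y)) * V := by
        rw [hN]; noncomm_ring
      rw [h, hui, one_mul, hY2, mul_zero, zero_mul]
    · refine ⟨(X * Y - Y * X) * V, ?_⟩
      have key : U * Y - Y * U = (p : ℤ_[p]) ^ i • (X * Y - Y * X) := by
        rw [hu]
        simp only [add_mul, mul_add, one_mul, mul_one, smul_mul_assoc, mul_smul_comm, smul_sub]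
        abel
      have h2 : Y + (p : ℤ_[p]) ^ i • ((X * Y - Y * X) * V)
          = Y + (U * Y - Y * U) * V := by
        rw [key, smul_mul_assoc]
      rw [h2, hN, sub_mul, mul_assoc Y U V, huiv, mul_one]
      abel
  · rintro ⟨hN2, X, hX⟩
    have hN00 : N 0 0 = (p : ℤ_[p]) ^ i * X 0 0 := by
      rw [hX]; simp
    have hN10 : N 1 0 = 1 + (p : ℤ_[p]) ^ i * X 1 0 := by
      rw [hX]; simp
    have hdet : IsUnit (!![(1 : ℤ_[p]), N 0 0; 0, N 1 0]).det := by
      rw [Matrix.det_fin_two_of]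
      simp only [mul_zero, sub_zero, one_mul]
      rw [hN10]
      exact padic_unit_one_add hi (X 1 0)
    have hg : IsUnit !![(1 : ℤ_[p]), N 0 0; 0, N 1 0] :=
      (Matrix.isUnit_iff_isUnit_det _).2 hdet
    have h00 : N 0 0 * N 0 0 + N 0 1 * N 1 0 = 0 := by
      have := congrFun (congrFun hN2 0) 0
      simpa [Matrix.mul_apply, Fin.sum_univ_two] using this
    have h10 : N 1 0 * N 0 0 + N 1 1 * N 1 0 = 0 := by
      have := congrFun (congrFun hN2 1) 0
      simpa [Matrix.mul_apply, Fin.sum_univ_two] using this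
    have hcomm : N * !![(1 : ℤ_[p]), N 0 0; 0, N 1 0]
        = !![(1 : ℤ_[p]), N 0 0; 0, N 1 0] * !![0, 0; 1, 0] := by
      ext a b
      fin_cases a <;> fin_cases b <;>
        simp [Matrix.mul_apply, Fin.sum_univ_two, h00, h10]
    refine ⟨hg.unit, ⟨!![0, X 0 0; 0, X 1 0], ?_⟩, ?_⟩
    · rw [hg.unit_spec]
      ext a b
      fin_cases a <;> fin_cases b <;>
        simp [Matrix.one_apply, hN00, hN10]
    · have hinv : !![(1 : ℤ_[p]), N 0 0; 0, N 1 0] *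
          ((hg.unit⁻¹ : (Matrix (Fin 2) (Fin 2) ℤ_[p])ˣ) : Matrix (Fin 2) (Fin 2) ℤ_[p]) = 1 := by
        have h := hg.unit.mul_inv
        rwa [hg.unit_spec] at h
      rw [hg.unit_spec, ← hcomm, mul_assoc, hinv, mul_one]
end
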